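/- arXiv:1904.12810 — 3 statements merged into one kernel-verified Lean document; each statement's English description precedes it below -/
import Mathlib

section
/- Let S be a real symmetric positive definite 2N×2N matrix. Then det S ≤ det Ṡ, with equality if and only if S̈ = 0. In particular the generalized likelihood ratio statistic T = det S / det Ṡ always lies in (0, 1]. -/
open Matrix Polynomial

/-- The proper part `Ċ` of a real `2N × 2N` matrix `C` with blocks `[[A, B],[B′, D]]`:
`Ċ = (1/2)·[[A+D, B−B′],[B′−B, A+D]]`. -/
noncomputable def dotPart {N : ℕ} (C : Matrix (Fin N ⊕ Fin N) (Fin N ⊕ Fin N) ℝ) :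
    Matrix (Fin N ⊕ Fin N) (Fin N ⊕ Fin N) ℝ :=
  (1/2 : ℝ) • Matrix.fromBlocks (C.toBlocks₁₁ + C.toBlocks₂₂) (C.toBlocks₁₂ - C.toBlocks₂₁)
    (C.toBlocks₂₁ - C.toBlocks₁₂) (C.toBlocks₁₁ + C.toBlocks₂₂)

/-- The improper part `C̈ = C − Ċ`. -/
noncomputable def ddotPart {N : ℕ} (C : Matrix (Fin N ⊕ Fin N) (Fin N ⊕ Fin N) ℝ) :
    Matrix (Fin N ⊕ Fin N) (Fin N ⊕ Fin N) ℝ :=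
  C - dotPart C

/-! With `J` the standard symplectic matrix and `T = Jᵀ S J`, one has `Ṡ = (S + T)/2` and
`S̈ = (S - T)/2`, and `T` is positive definite with `det T = det S`. So it suffices that
`det A · det B < det ((A + B)/2)²` for distinct positive definite `A` and `B`. Conjugating by
`A^{-1/2}` reduces this to `A = 1`, where in terms of the eigenvalues `μᵢ` of `B` it is the
AM–GM inequality `μᵢ ≤ ((1 + μᵢ)/2)²`, strict as soon as some `μᵢ ≠ 1`. -/

namespace Matrix

section Hermitian

variable {𝕜 n : Type*} [RCLike 𝕜] [Fintype n] [DecidableEq n]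

theorem IsHermitian.det_cfc {A : Matrix n n 𝕜} (hA : A.IsHermitian) (f : ℝ → ℝ) :
    (cfc f A).det = ∏ i, (f (hA.eigenvalues i) : 𝕜) := by
  rw [hA.cfc_eq]
  simp [IsHermitian.cfc, -Unitary.conjStarAlgAut_apply]

theorem IsHermitian.eq_one_of_eigenvalues_eq_one {A : Matrix n n 𝕜} (hA : A.IsHermitian)
    (h : ∀ i, hA.eigenvalues i = 1) : A = 1 := by
  have hsa : IsSelfAdjoint A := hA
  rw [← cfc_id' ℝ A, ← cfc_const_one ℝ A]
  refine cfc_congr fun x hx => ?_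
  obtain ⟨i, rfl⟩ := hA.spectrum_real_eq_range_eigenvalues ▸ hx
  exact h i

end Hermitian

variable {n : Type*} [Fintype n] [DecidableEq n]

theorem PosDef.det_lt_sq_det_half_one_add {M : Matrix n n ℝ} (hM : M.PosDef) (hM1 : M ≠ 1) :
    M.det < (((1/2 : ℝ) • (1 + M)).det) ^ 2 := by
  have hsa : IsSelfAdjoint M := hM.1
  have hmid : (1/2 : ℝ) • (1 + M) = cfc (fun x : ℝ => 2⁻¹ * (1 + x)) M := by
    rw [cfc_const_mul _ _ M, cfc_const_add _ _ M, cfc_id' ℝ M]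
    simp [Algebra.algebraMap_eq_smul_one]
  obtain ⟨j, hj⟩ : ∃ j, hM.1.eigenvalues j ≠ 1 := by
    by_contra! h
    exact hM1 (hM.1.eq_one_of_eigenvalues_eq_one h)
  rw [hmid, hM.1.det_cfc, hM.1.det_eq_prod_eigenvalues, ← Finset.prod_pow]
  simp only [RCLike.ofReal_real_eq_id, id]
  refine Finset.prod_lt_prod (fun i _ => hM.eigenvalues_pos i) (fun i _ => ?_)
    ⟨j, Finset.mem_univ _, ?_⟩
  · nlinarith [sq_nonneg (hM.1.eigenvalues i - 1)]
  · nlinarith [sq_pos_of_ne_zero (sub_ne_zero.2 hj)]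

open scoped MatrixOrder in
theorem PosDef.det_mul_det_lt_sq_det_midpoint {A B : Matrix n n ℝ} (hA : A.PosDef)
    (hB : B.PosDef) (hAB : A ≠ B) : A.det * B.det < (((1/2 : ℝ) • (A + B)).det) ^ 2 := by
  set R := CFC.sqrt A
  have hRR : R * R = A := CFC.sqrt_mul_sqrt_self A hA.posSemidef.nonneg
  have hRstar : star R⁻¹ = R⁻¹ := by
    rw [star_eq_conjTranspose, conjTranspose_nonsing_inv, (CFC.sqrt_nonneg A).posSemidef.1.eq]
  have hRu : IsUnit R := (CFC.isUnit_sqrt_iff A).2 hA.isUnit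
  have hRdet : IsUnit R.det := (isUnit_iff_isUnit_det R).1 hRu
  set M := R⁻¹ * B * R⁻¹
  have hBM : B = R * M * R := by
    simp only [M, ← mul_assoc, mul_nonsing_inv _ hRdet, one_mul]
    rw [mul_assoc, nonsing_inv_mul _ hRdet, mul_one]
  have hM : M.PosDef := by
    show (R⁻¹ * B * R⁻¹).PosDef
    nth_rewrite 1 [← hRstar]
    exact (IsUnit.posDef_star_left_conjugate_iff (isUnit_nonsing_inv_iff.2 hRu)).2 hB
  have hM1 : M ≠ 1 := fun h => hAB (by rw [hBM, h, mul_one, hRR])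
  have hmid : (1/2 : ℝ) • (A + B) = R * ((1/2 : ℝ) • (1 + M)) * R := by
    rw [hBM, ← hRR]; noncomm_ring
  have hdetR : 0 < R.det ^ 4 := by
    have := hRdet.ne_zero
    positivity
  calc A.det * B.det = R.det ^ 4 * M.det := by rw [hBM, ← hRR]; simp only [det_mul]; ring
    _ < R.det ^ 4 * (((1/2 : ℝ) • (1 + M)).det) ^ 2 :=
      mul_lt_mul_of_pos_left (hM.det_lt_sq_det_half_one_add hM1) hdetR
    _ = (((1/2 : ℝ) • (A + B)).det) ^ 2 := by rw [hmid]; simp only [det_mul]; ring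

end Matrix

section SymplecticConj

variable {N : ℕ}

local notation "𝕁" => Matrix.J (Fin N) ℝ

theorem dotPart_eq_half_add (C : Matrix (Fin N ⊕ Fin N) (Fin N ⊕ Fin N) ℝ) :
    dotPart C = (1/2 : ℝ) • (C + 𝕁ᵀ * C * 𝕁) := by
  rw [dotPart, ← fromBlocks_toBlocks C, Matrix.J, fromBlocks_transpose, fromBlocks_multiply,
    fromBlocks_multiply, fromBlocks_add]
  simp only [toBlocks_fromBlocks₁₁, toBlocks_fromBlocks₁₂, toBlocks_fromBlocks₂₁,
    toBlocks_fromBlocks₂₂]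
  congr 1
  ext (i | i) (j | j) <;> simp <;> ring

theorem ddotPart_eq_half_sub (C : Matrix (Fin N ⊕ Fin N) (Fin N ⊕ Fin N) ℝ) :
    ddotPart C = (1/2 : ℝ) • (C - 𝕁ᵀ * C * 𝕁) := by
  rw [ddotPart, dotPart_eq_half_add]
  module

theorem Matrix.PosDef.transpose_J_mul_mul_J {S : Matrix (Fin N ⊕ Fin N) (Fin N ⊕ Fin N) ℝ}
    (hS : S.PosDef) : (𝕁ᵀ * S * 𝕁).PosDef := by
  have hJ : IsUnit 𝕁 := (isUnit_iff_isUnit_det _).2 (isUnit_det_J _ _)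
  simpa [star_eq_conjTranspose] using (IsUnit.posDef_star_left_conjugate_iff hJ).2 hS

theorem det_transpose_J_mul_mul_J (S : Matrix (Fin N ⊕ Fin N) (Fin N ⊕ Fin N) ℝ) :
    (𝕁ᵀ * S * 𝕁).det = S.det := by
  rw [det_mul, det_mul, det_transpose, mul_right_comm, J_det_mul_J_det, one_mul]

theorem Matrix.PosDef.dotPart {S : Matrix (Fin N ⊕ Fin N) (Fin N ⊕ Fin N) ℝ} (hS : S.PosDef) :
    (dotPart S).PosDef := by
  rw [dotPart_eq_half_add]
  exact (hS.add hS.transpose_J_mul_mul_J).smul (by norm_num)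

theorem det_lt_det_dotPart {S : Matrix (Fin N ⊕ Fin N) (Fin N ⊕ Fin N) ℝ} (hS : S.PosDef)
    (hS' : ddotPart S ≠ 0) : S.det < (dotPart S).det := by
  have hST : S ≠ 𝕁ᵀ * S * 𝕁 := fun h =>
    hS' (by rw [ddotPart_eq_half_sub, ← h, sub_self, smul_zero])
  have key := hS.det_mul_det_lt_sq_det_midpoint hS.transpose_J_mul_mul_J hST
  rw [det_transpose_J_mul_mul_J, ← dotPart_eq_half_add, ← sq] at key
  exact lt_of_pow_lt_pow_left₀ 2 hS.dotPart.det_pos.le key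

end SymplecticConj

theorem statement9_general (N : ℕ) (S : Matrix (Fin N ⊕ Fin N) (Fin N ⊕ Fin N) ℝ) (hS : S.PosDef) :
    S.det ≤ (dotPart S).det ∧
    (S.det = (dotPart S).det ↔ ddotPart S = 0) ∧
    0 < S.det / (dotPart S).det ∧ S.det / (dotPart S).det ≤ 1 := by
  have hiff : S.det = (dotPart S).det ↔ ddotPart S = 0 := by
    refine ⟨fun h => by_contra fun hS' => (det_lt_det_dotPart hS hS').ne h, fun h => ?_⟩
    rw [← sub_eq_zero.1 (h : S - dotPart S = 0)]
  have hle : S.det ≤ (dotPart S).det := by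
    by_cases h : ddotPart S = 0
    · exact (hiff.2 h).le
    · exact (det_lt_det_dotPart hS h).le
  have hdot : 0 < (dotPart S).det := hS.dotPart.det_pos
  exact ⟨hle, hiff, div_pos hS.det_pos hdot, (div_le_one hdot).2 hle⟩

theorem statement9 (N : ℕ) (hN : 1 ≤ N) (S : Matrix (Fin N ⊕ Fin N) (Fin N ⊕ Fin N) ℝ) (hS : S.PosDef) :
    S.det ≤ (dotPart S).det ∧
    (S.det = (dotPart S).det ↔ ddotPart S = 0) ∧
    0 < S.det / (dotPart S).det ∧ S.det / (dotPart S).det ≤ 1 :=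
  statement9_general N S hS
end

section
/- For every real γ ≥ 2, the probability density f on (0, c) has mean 1/γ and variance (γ−1)/γ³: that is, ∫₀^c r·f(r) dr = 1/γ and ∫₀^c r²·f(r) dr − 1/γ² = (γ−1)/γ³. -/
/-!
With `c = 4(γ-1)/γ²` the radicand factors as `4(γ-1)(1-r)/r - (γ-2)² = (γ/r)² · r(c-r)`, so
`r f(r) = γ/(2π) · √(r(c-r))/(1-r)`, and `r² f(r)` is the same with an extra factor
`r = 1 - (1-r)`. Both moments thus reduce to `∫₀^c √(r(c-r)) dr = πc²/8` (a half disc) and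
`∫₀^c √(r(c-r))/(1-r) dr = π(2 - c - 2√(1-c))/2`, the latter by an explicit arcsine
antiderivative; that integrand is integrable as the nonnegative derivative of a continuous
function. Finally `√(1-c) = (γ-2)/γ` because `γ ≥ 2`.
-/

open MeasureTheory Real Set intervalIntegral

theorem HasDerivAt.arcsin_of_sq_eq {f : ℝ → ℝ} {f' x w : ℝ} (hf : HasDerivAt f f' x)
    (hw : 0 < w) (hsq : 1 - f x ^ 2 = w ^ 2) :
    HasDerivAt (fun y => arcsin (f y)) (f' / w) x := by
  have hlt : f x ^ 2 < 1 := by nlinarith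
  have h₁ : f x ≠ -1 := by rintro h; norm_num [h] at hlt
  have h₂ : f x ≠ 1 := by rintro h; norm_num [h] at hlt
  have := (hasDerivAt_arcsin h₁ h₂).comp x hf
  rw [hsq, sqrt_sq hw.le, one_div_mul_eq_div] at this
  exact this

section

variable {c r : ℝ}

theorem hasDerivAt_sqrt_mul_sub (hr : 0 < r) (hrc : r < c) :
    HasDerivAt (fun x => √(x * (c - x))) ((c - 2 * r) / (2 * √(r * (c - r)))) r := by
  have hpos : 0 < r * (c - r) := mul_pos hr (sub_pos.2 hrc)
  have hq : HasDerivAt (fun x => x * (c - x)) (c - 2 * r) r :=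
    ((hasDerivAt_id' r).mul ((hasDerivAt_id' r).const_sub c)).congr_deriv (by ring)
  exact hq.sqrt hpos.ne'

theorem hasDerivAt_arcsin_two_mul_div_sub_one (hr : 0 < r) (hrc : r < c) :
    HasDerivAt (fun x => arcsin (2 * x / c - 1)) (1 / √(r * (c - r))) r := by
  have hc : 0 < c := hr.trans hrc
  have hpos : 0 < r * (c - r) := mul_pos hr (sub_pos.2 hrc)
  have hu : HasDerivAt (fun x => 2 * x / c - 1) (2 / c) r :=
    (((hasDerivAt_id' r).const_mul 2).div_const c |>.sub_const 1).congr_deriv (by ring)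
  refine (hu.arcsin_of_sq_eq (w := 2 * √(r * (c - r)) / c) (by positivity) ?_).congr_deriv ?_
  · rw [div_pow, mul_pow, sq_sqrt hpos.le]
    field_simp
    ring
  · field_simp

theorem hasDerivAt_sqrt_one_sub_mul_arcsin (hc : c ≤ 1) (hr : 0 < r) (hrc : r < c) :
    HasDerivAt (fun x => √(1 - c) * arcsin (1 - 2 * (c - x) / (c * (1 - x))))
      ((1 - c) / ((1 - r) * √(r * (c - r)))) r := by
  -- for `c = 1` the arcsine sits at `-1`, where it is not differentiable, but its factor is `0`
  rcases hc.eq_or_lt with rfl | hc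
  · simpa using hasDerivAt_const r (0 : ℝ)
  have hc0 : 0 < c := hr.trans hrc
  have h1r : 0 < 1 - r := by linarith
  have h1c : 0 < 1 - c := by linarith
  have hpos : 0 < r * (c - r) := mul_pos hr (sub_pos.2 hrc)
  have hv : HasDerivAt (fun x => 1 - 2 * (c - x) / (c * (1 - x)))
      (2 * (1 - c) / (c * (1 - r) ^ 2)) r := by
    have := ((hasDerivAt_id' r).const_sub c).const_mul 2 |>.div
      (((hasDerivAt_id' r).const_sub 1).const_mul c) (by positivity)
    refine (this.const_sub 1).congr_deriv ?_
    field_simp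
    ring
  refine ((hv.arcsin_of_sq_eq (w := 2 * √(1 - c) * √(r * (c - r)) / (c * (1 - r)))
    (by positivity) ?_).const_mul √(1 - c)).congr_deriv ?_
  · rw [div_pow, mul_pow, mul_pow, sq_sqrt hpos.le, sq_sqrt h1c.le]
    field_simp
    ring
  · field_simp

theorem continuousOn_sqrt_one_sub_mul_arcsin (hc0 : 0 < c) (hc : c ≤ 1) :
    ContinuousOn (fun x => √(1 - c) * arcsin (1 - 2 * (c - x) / (c * (1 - x)))) (Icc 0 c) := by
  rcases hc.eq_or_lt with rfl | hc
  · simpa using continuousOn_const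
  refine continuousOn_const.mul (continuous_arcsin.comp_continuousOn ?_)
  refine continuousOn_const.sub (ContinuousOn.div (by fun_prop) (by fun_prop) fun x hx => ?_)
  have : 0 < 1 - x := by linarith [hx.2]
  positivity

theorem integral_sqrt_mul_sub (hc : 0 < c) :
    ∫ x in (0 : ℝ)..c, √(x * (c - x)) = π * c ^ 2 / 8 := by
  have hscale : ∀ x, √(x * (c - x)) = c / 2 * √(1 - (x / (c / 2) - 1) ^ 2) := fun x => by
    rw [show x * (c - x) = (c / 2) ^ 2 * (1 - (x / (c / 2) - 1) ^ 2) by field_simp; ring,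
      sqrt_mul (sq_nonneg _), sqrt_sq (by positivity)]
  simp only [hscale, intervalIntegral.integral_const_mul]
  rw [integral_comp_div_sub (fun x => √(1 - x ^ 2)) (by positivity : c / 2 ≠ 0)]
  norm_num [hc.ne', integral_sqrt_one_sub_sq]
  ring

/-- The last arcsine argument is `((2-c)x - c)/(c(1-x))`, written so that it is `1` at `x = c`
even when `c = 1`. -/
noncomputable def antiderivSqrtMulSubDivOneSub (c x : ℝ) : ℝ :=
  (1 - c / 2) * arcsin (2 * x / c - 1) - √(x * (c - x))
    - √(1 - c) * arcsin (1 - 2 * (c - x) / (c * (1 - x)))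

theorem hasDerivAt_antiderivSqrtMulSubDivOneSub (hc : c ≤ 1) (hr : 0 < r) (hrc : r < c) :
    HasDerivAt (antiderivSqrtMulSubDivOneSub c) (√(r * (c - r)) / (1 - r)) r := by
  have h1r : 1 - r ≠ 0 := by linarith
  have hpos : 0 < r * (c - r) := mul_pos hr (sub_pos.2 hrc)
  refine ((((hasDerivAt_arcsin_two_mul_div_sub_one hr hrc).const_mul (1 - c / 2)).sub
    (hasDerivAt_sqrt_mul_sub hr hrc)).sub
    (hasDerivAt_sqrt_one_sub_mul_arcsin hc hr hrc)).congr_deriv ?_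
  field_simp
  rw [sq_sqrt hpos.le]
  ring

theorem continuousOn_antiderivSqrtMulSubDivOneSub (hc0 : 0 < c) (hc : c ≤ 1) :
    ContinuousOn (antiderivSqrtMulSubDivOneSub c) (Icc 0 c) :=
  (Continuous.continuousOn (by fun_prop)).sub (continuousOn_sqrt_one_sub_mul_arcsin hc0 hc)

theorem intervalIntegrable_sqrt_mul_sub_div_one_sub (hc0 : 0 < c) (hc : c ≤ 1) :
    IntervalIntegrable (fun x => √(x * (c - x)) / (1 - x)) volume 0 c :=
  (intervalIntegrable_iff_integrableOn_Ioc_of_le hc0.le).2 <|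
    integrableOn_deriv_of_nonneg (continuousOn_antiderivSqrtMulSubDivOneSub hc0 hc)
      (fun x hx => hasDerivAt_antiderivSqrtMulSubDivOneSub hc hx.1 hx.2)
      fun x hx => div_nonneg (sqrt_nonneg _) (by linarith [hx.2])

theorem integral_sqrt_mul_sub_div_one_sub (hc0 : 0 < c) (hc : c ≤ 1) :
    ∫ x in (0 : ℝ)..c, √(x * (c - x)) / (1 - x) = π * (2 - c - 2 * √(1 - c)) / 2 := by
  rw [integral_eq_sub_of_hasDerivAt_of_le hc0.le
    (continuousOn_antiderivSqrtMulSubDivOneSub hc0 hc)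
    (fun x hx => hasDerivAt_antiderivSqrtMulSubDivOneSub hc hx.1 hx.2)
    (intervalIntegrable_sqrt_mul_sub_div_one_sub hc0 hc)]
  norm_num [antiderivSqrtMulSubDivOneSub, hc0.ne']
  ring

theorem integral_mul_sqrt_mul_sub_div_one_sub (hc0 : 0 < c) (hc : c ≤ 1) :
    ∫ x in (0 : ℝ)..c, x * √(x * (c - x)) / (1 - x)
      = π * (2 - c - 2 * √(1 - c)) / 2 - π * c ^ 2 / 8 := by
  have hsplit : EqOn (fun x => x * √(x * (c - x)) / (1 - x))
      (fun x => √(x * (c - x)) / (1 - x) - √(x * (c - x))) (uIcc 0 c) := by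
    intro x hx
    rcases eq_or_ne x 1 with rfl | hx1
    · simp [sqrt_eq_zero'.2 (by linarith : c - 1 ≤ 0)]
    · field_simp [sub_ne_zero.2 hx1.symm]
      ring
  rw [integral_congr hsplit, intervalIntegral.integral_sub
    (intervalIntegrable_sqrt_mul_sub_div_one_sub hc0 hc)
    ((by fun_prop : Continuous _).intervalIntegrable _ _),
    integral_sqrt_mul_sub_div_one_sub hc0 hc, integral_sqrt_mul_sub hc0]

end

theorem mul_density_eq {γ r : ℝ} (hγ : 0 < γ) (hr : 0 ≤ r) :
    r * ((1 / (2 * π * (1 - r))) * √(4 * (γ - 1) * (1 - r) / r - (γ - 2) ^ 2))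
      = γ / (2 * π) * (√(r * (4 * (γ - 1) / γ ^ 2 - r)) / (1 - r)) := by
  rcases hr.eq_or_lt with rfl | hr
  · simp
  rw [show 4 * (γ - 1) * (1 - r) / r - (γ - 2) ^ 2
      = (γ / r) ^ 2 * (r * (4 * (γ - 1) / γ ^ 2 - r)) by field_simp; ring,
    sqrt_mul (sq_nonneg _), sqrt_sq (by positivity)]
  field_simp

theorem statement12 (γ : ℝ) (hγ : 2 ≤ γ) :
    (∫ r in (0 : ℝ)..(4 * (γ - 1) / γ ^ 2),
      r * ((1 / (2 * π * (1 - r))) * Real.sqrt (4 * (γ - 1) * (1 - r) / r - (γ - 2) ^ 2))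
        = 1 / γ) ∧
    (∫ r in (0 : ℝ)..(4 * (γ - 1) / γ ^ 2),
      r ^ 2 * ((1 / (2 * π * (1 - r))) * Real.sqrt (4 * (γ - 1) * (1 - r) / r - (γ - 2) ^ 2)))
        - 1 / γ ^ 2 = (γ - 1) / γ ^ 3 := by
  have hγ0 : 0 < γ := by linarith
  set c := 4 * (γ - 1) / γ ^ 2 with hc
  have hc0 : 0 < c := by rw [hc]; exact div_pos (by linarith) (by positivity)
  have hc1 : c ≤ 1 := by rw [hc, div_le_one (by positivity)]; nlinarith [sq_nonneg (γ - 2)]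
  have hsqrt : √(1 - c) = (γ - 2) / γ := by
    rw [show 1 - c = ((γ - 2) / γ) ^ 2 by rw [hc]; field_simp; ring]
    exact sqrt_sq (div_nonneg (by linarith) hγ0.le)
  have hnonneg : ∀ r ∈ uIcc 0 c, 0 ≤ r := fun r hr => (uIcc_of_le hc0.le ▸ hr).1
  constructor
  · rw [integral_congr fun r hr => mul_density_eq hγ0 (hnonneg r hr),
      intervalIntegral.integral_const_mul, integral_sqrt_mul_sub_div_one_sub hc0 hc1, hsqrt, hc]
    field_simp
    ring
  · rw [integral_congr (g := fun r => γ / (2 * π) * (r * √(r * (c - r)) / (1 - r)))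
        fun r hr => by rw [sq, mul_assoc, mul_density_eq hγ0 (hnonneg r hr)]; ring,
      intervalIntegral.integral_const_mul, integral_mul_sqrt_mul_sub_div_one_sub hc0 hc1, hsqrt,
      hc]
    field_simp
    ring
end

section
/- Let γ > 2 and let (M_N) be a sequence of positive integers with M_N ≥ 2N + 2 and M_N/N → γ as N → ∞. Set a_{N,n} = (M_N − N − n + 1)/2 for 1 ≤ n ≤ N and b_N = (N+1)/2. Then the variance of the log-GLRT statistic under the properness hypothesis converges: Σ_{n=1}^N ( ψ′(a_{N,n}) − ψ′(a_{N,n} + b_N) ) → 2·log( (γ−1)² / (γ(γ−2)) ) as N → ∞. -/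
open MeasureTheory Real Filter

/-- The digamma function: the derivative of `log Γ` on `(0, ∞)`. -/
noncomputable def digamma (x : ℝ) : ℝ :=
  deriv (fun y => Real.log (Real.Gamma y)) x

/-- The trigamma function: the derivative of the digamma function. -/
noncomputable def trigamma (x : ℝ) : ℝ :=
  deriv digamma x

/-!
`f = log ∘ Gamma` is convex with `f (x + 1) = f x + log x`, so `ψ = f'` satisfies
`ψ (x + 1) = ψ x + 1 / x` and `log (x - 1) ≤ ψ x ≤ log x`. Hence
`ψ x = lim (log n - ∑_{j<n} 1 / (x + j))`; the derivatives of these approximants converge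
uniformly on `(x / 2, ∞)`, so `ψ' x = ∑_j 1 / (x + j) ^ 2`, and telescoping gives
`1 / x ≤ ψ' x ≤ 1 / (x - 1)`. Each summand is thereby squeezed between
`2 / (M - N + 1 - n) - 2 / (M - n)` and `2 / (M - N - 1 - n) - 2 / (M + 2 - n)`.
Finally `∑_{n=1}^N 1 / (r - n) = ψ r - ψ (r - N)` and `ψ r - log r → 0`, so such sums tend to
`log (ρ / (ρ - 1))` when `r_N / N → ρ > 1`.
-/

open Topology

lemma tendsto_log_add_const_sub_log (c : ℝ) :
    Tendsto (fun x => log (x + c) - log x) atTop (𝓝 0) := by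
  have h : Tendsto (fun x : ℝ => 1 + c * x⁻¹) atTop (𝓝 1) := by
    simpa using tendsto_inv_atTop_zero.const_mul c |>.const_add 1
  rw [← log_one]
  refine (h.log one_ne_zero).congr' ?_
  filter_upwards [eventually_gt_atTop 0, eventually_gt_atTop (-c)] with x hx hxc
  rw [← log_div (by linarith) hx.ne']
  congr 1
  field_simp

lemma hasDerivAt_one_div_add (y c : ℝ) (h : y + c ≠ 0) :
    HasDerivAt (fun z => 1 / (z + c)) (-(1 / (y + c) ^ 2)) y := by
  simpa [one_div, neg_div] using ((hasDerivAt_id y).add_const c).fun_inv h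

lemma sum_range_one_div_add_sub_one_div_add_succ (y : ℝ) (n : ℕ) :
    ∑ j ∈ Finset.range n, (1 / (y + j) - 1 / (y + j + 1)) = 1 / y - 1 / (y + n) := by
  simpa [add_assoc] using Finset.sum_range_sub' (fun j : ℕ => 1 / (y + j)) n

lemma one_div_sub_one_div_add_one_le_one_div_sq {t : ℝ} (ht : 0 < t) :
    1 / t - 1 / (t + 1) ≤ 1 / t ^ 2 := by
  rw [div_sub_div _ _ ht.ne' (by positivity), div_le_div_iff₀ (by positivity) (by positivity)]
  nlinarith

lemma one_div_sq_le_one_div_sub_one_sub_one_div {t : ℝ} (ht : 1 < t) :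
    1 / t ^ 2 ≤ 1 / (t - 1) - 1 / t := by
  have ht₁ : 0 < t - 1 := by linarith
  rw [div_sub_div _ _ ht₁.ne' (by positivity), div_le_div_iff₀ (by positivity) (by positivity)]
  nlinarith

section Digamma

variable {x : ℝ}

lemma differentiableAt_log_Gamma (hx : 0 < x) :
    DifferentiableAt ℝ (fun y => log (Gamma y)) x :=
  (differentiableAt_Gamma fun m => by linarith [(m.cast_nonneg : (0 : ℝ) ≤ m)]).log
    (Gamma_pos_of_pos hx).ne'

lemma log_Gamma_add_one (hx : 0 < x) : log (Gamma (x + 1)) = log (Gamma x) + log x := by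
  rw [Gamma_add_one hx.ne', log_mul hx.ne' (Gamma_pos_of_pos hx).ne', add_comm]

lemma digamma_add_one (hx : 0 < x) : digamma (x + 1) = digamma x + 1 / x := by
  unfold digamma
  rw [← deriv_comp_add_const, one_div, ← deriv_log,
    ← deriv_add (differentiableAt_log_Gamma hx) (differentiableAt_log hx.ne')]
  apply EventuallyEq.deriv_eq
  filter_upwards [eventually_gt_nhds hx] with y hy using log_Gamma_add_one hy

lemma digamma_le_log (hx : 0 < x) : digamma x ≤ log x := by
  have h := convexOn_log_Gamma.deriv_le_slope (Set.mem_Ioi.mpr hx)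
    (Set.mem_Ioi.mpr (by linarith : (0 : ℝ) < x + 1)) (lt_add_one x)
    (differentiableAt_log_Gamma hx)
  rwa [slope_def_field, add_sub_cancel_left, div_one, Function.comp_apply, Function.comp_apply,
    log_Gamma_add_one hx, add_sub_cancel_left] at h

lemma log_sub_one_le_digamma (hx : 1 < x) : log (x - 1) ≤ digamma x := by
  have hx₁ : 0 < x - 1 := by linarith
  have h := convexOn_log_Gamma.slope_le_deriv (Set.mem_Ioi.mpr hx₁)
    (Set.mem_Ioi.mpr (by linarith))
    (sub_one_lt x) (differentiableAt_log_Gamma (by linarith))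
  have hrec := log_Gamma_add_one hx₁
  rw [sub_add_cancel] at hrec
  rwa [slope_def_field, sub_sub_cancel, div_one, Function.comp_apply, Function.comp_apply, hrec,
    add_sub_cancel_left] at h

lemma digamma_add_nat (hx : 0 < x) (n : ℕ) :
    digamma (x + n) = digamma x + ∑ j ∈ Finset.range n, 1 / (x + j) := by
  induction n with
  | zero => simp
  | succ n ih =>
    rw [Finset.sum_range_succ, ← add_assoc, ← ih, Nat.cast_succ, ← add_assoc,
      digamma_add_one (by positivity)]

lemma digamma_sub_digamma_sub_nat {r : ℝ} {N : ℕ} (hN : (N : ℝ) < r) :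
    digamma r - digamma (r - N) = ∑ n ∈ Finset.Icc 1 N, 1 / (r - n) := by
  induction N with
  | zero => simp
  | succ N ih =>
    have hN' : 0 < r - (N + 1) := by push_cast at hN; linarith
    rw [Finset.sum_Icc_succ_top (by omega), ← ih (by push_cast at hN; linarith), Nat.cast_succ]
    have hrec := digamma_add_one hN'
    rw [show r - (N + 1 : ℝ) + 1 = r - N by ring] at hrec
    rw [hrec]
    ring

lemma tendsto_digamma_sub_log : Tendsto (fun x => digamma x - log x) atTop (𝓝 0) := by
  refine tendsto_of_tendsto_of_tendsto_of_le_of_le' (tendsto_log_add_const_sub_log (-1))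
    tendsto_const_nhds ?_ ?_
  · filter_upwards [eventually_gt_atTop 1] with x hx
    have h := log_sub_one_le_digamma hx
    rw [sub_eq_add_neg] at h
    linarith
  · filter_upwards [eventually_gt_atTop 0] with x hx
    linarith [digamma_le_log hx]

lemma tendsto_log_sub_sum_range_one_div_add (hx : 0 < x) :
    Tendsto (fun n : ℕ => log n - ∑ j ∈ Finset.range n, 1 / (x + j)) atTop
      (𝓝 (digamma x)) := by
  have hshift : Tendsto (fun n : ℕ => x + n) atTop atTop :=
    tendsto_atTop_add_const_left _ x tendsto_natCast_atTop_atTop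
  have h := (((tendsto_log_add_const_sub_log x).comp tendsto_natCast_atTop_atTop).add
    (tendsto_digamma_sub_log.comp hshift)).const_sub (digamma x)
  rw [add_zero, sub_zero] at h
  refine h.congr fun n => ?_
  simp only [Function.comp_apply, digamma_add_nat hx, add_comm (n : ℝ) x]
  ring

lemma summable_one_div_add_sq (hx : 0 < x) : Summable fun j : ℕ => 1 / (x + j) ^ 2 :=
  ((summable_one_div_nat_add_rpow x 2).mpr one_lt_two).congr fun j => by
    rw [abs_of_pos (by positivity), rpow_two, add_comm]

lemma hasDerivAt_digamma (hx : 0 < x) :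
    HasDerivAt digamma (∑' j : ℕ, 1 / (x + j) ^ 2) x := by
  have hx₂ : 0 < x / 2 := by positivity
  refine hasDerivAt_of_tendstoUniformlyOn (s := Set.Ioi (x / 2)) isOpen_Ioi
    (f := fun (n : ℕ) (y : ℝ) => log n - ∑ j ∈ Finset.range n, 1 / (y + j))
    (tendstoUniformlyOn_tsum_nat (f := fun (j : ℕ) (y : ℝ) => 1 / (y + j) ^ 2)
      (summable_one_div_add_sq hx₂) fun j y hy => ?_)
    (Eventually.of_forall fun n y hy => ?_)
    (fun y hy => tendsto_log_sub_sum_range_one_div_add (hx₂.trans hy)) (half_lt_self hx)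
  · have hy : x / 2 < y := hy
    rw [norm_of_nonneg (by positivity)]
    gcongr
  · have hy : 0 < y := hx₂.trans hy
    have h := HasDerivAt.fun_sum (u := Finset.range n) fun (j : ℕ) _ =>
      hasDerivAt_one_div_add y j (by positivity)
    simpa using h.const_sub (log n)

lemma trigamma_eq_tsum (hx : 0 < x) : trigamma x = ∑' j : ℕ, 1 / (x + j) ^ 2 :=
  (hasDerivAt_digamma hx).deriv

lemma one_div_le_trigamma (hx : 0 < x) : 1 / x ≤ trigamma x := by
  have hlim : Tendsto (fun n : ℕ => 1 / x - 1 / (x + n)) atTop (𝓝 (1 / x)) := by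
    simpa using ((tendsto_atTop_add_const_left _ x tendsto_natCast_atTop_atTop).inv_tendsto_atTop
      |>.const_sub (1 / x))
  rw [trigamma_eq_tsum hx]
  refine le_of_tendsto' hlim fun n => ?_
  rw [← sum_range_one_div_add_sub_one_div_add_succ]
  exact (Finset.sum_le_sum fun j _ =>
    one_div_sub_one_div_add_one_le_one_div_sq (by positivity)).trans
    ((summable_one_div_add_sq hx).sum_le_tsum _ fun j _ => by positivity)

lemma trigamma_le_one_div_sub_one (hx : 1 < x) : trigamma x ≤ 1 / (x - 1) := by
  have hx₁ : 0 < x - 1 := by linarith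
  rw [trigamma_eq_tsum (by linarith)]
  refine Real.tsum_le_of_sum_range_le (fun j => by positivity) fun n => ?_
  calc ∑ j ∈ Finset.range n, 1 / (x + j) ^ 2
      ≤ ∑ j ∈ Finset.range n, (1 / (x - 1 + j) - 1 / (x - 1 + j + 1)) := by
        refine Finset.sum_le_sum fun j _ => ?_
        rw [show x - 1 + j = x + j - 1 by ring, sub_add_cancel]
        exact one_div_sq_le_one_div_sub_one_sub_one_div (by linarith [j.cast_nonneg (α := ℝ)])
    _ = 1 / (x - 1) - 1 / (x - 1 + n) := sum_range_one_div_add_sub_one_div_add_succ _ _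
    _ ≤ 1 / (x - 1) := sub_le_self _ (by positivity)

end Digamma

lemma le_trigamma_sub_trigamma_add {a b : ℝ} (ha : 0 < a) (hab : 1 < a + b) :
    1 / a - 1 / (a + b - 1) ≤ trigamma a - trigamma (a + b) := by
  linarith [one_div_le_trigamma ha, trigamma_le_one_div_sub_one hab]

lemma trigamma_sub_trigamma_add_le {a b : ℝ} (ha : 1 < a) (hb : 0 ≤ b) :
    trigamma a - trigamma (a + b) ≤ 1 / (a - 1) - 1 / (a + b) := by
  linarith [trigamma_le_one_div_sub_one ha, one_div_le_trigamma (by linarith : 0 < a + b)]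

lemma tendsto_sum_Icc_one_div_sub {r : ℕ → ℝ} {ρ : ℝ} (hρ : 1 < ρ)
    (hr : Tendsto (fun N : ℕ => r N / N) atTop (𝓝 ρ)) :
    Tendsto (fun N : ℕ => ∑ n ∈ Finset.Icc 1 N, 1 / (r N - n)) atTop
      (𝓝 (log (ρ / (ρ - 1)))) := by
  have hgap : Tendsto (fun N : ℕ => r N - N) atTop atTop := by
    refine ((hr.sub_const 1).pos_mul_atTop (sub_pos.2 hρ) tendsto_natCast_atTop_atTop).congr' ?_
    filter_upwards [eventually_ne_atTop 0] with N hN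
    field_simp
  have hr_top : Tendsto r atTop atTop :=
    tendsto_atTop_mono (fun N => by linarith [N.cast_nonneg (α := ℝ)]) hgap
  have hlog :
      Tendsto (fun N : ℕ => log (r N / (r N - N))) atTop (𝓝 (log (ρ / (ρ - 1)))) := by
    have hρ₀ : ρ - 1 ≠ 0 := by linarith
    refine ((hr.div (hr.sub_const 1) hρ₀).log (div_ne_zero (by linarith) hρ₀)).congr' ?_
    filter_upwards [eventually_ne_atTop 0, hgap.eventually_gt_atTop 0] with N hN hgapN
    rw [Pi.div_apply, div_sub_one (by positivity), div_div_div_cancel_right₀ (by positivity)]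
  have h := ((tendsto_digamma_sub_log.comp hr_top).sub (tendsto_digamma_sub_log.comp hgap)).add hlog
  rw [sub_zero, zero_add] at h
  refine h.congr' ?_
  filter_upwards [hgap.eventually_gt_atTop 0] with N hN
  rw [← digamma_sub_digamma_sub_nat (by linarith), log_div (by linarith) hN.ne',
    Function.comp_apply, Function.comp_apply]
  ring

lemma tendsto_sub_mul_add_div_natCast {u : ℕ → ℝ} {ρ : ℝ}
    (hu : Tendsto (fun N : ℕ => u N / N) atTop (𝓝 ρ)) (k c : ℝ) :
    Tendsto (fun N : ℕ => (u N - k * N + c) / N) atTop (𝓝 (ρ - k)) := by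
  have h := (hu.sub_const k).add (tendsto_const_div_atTop_nhds_zero_nat c)
  rw [add_zero] at h
  refine h.congr' ?_
  filter_upwards [eventually_ne_atTop 0] with N hN
  field_simp

lemma tendsto_sum_Icc_one_div_half_sub {u : ℕ → ℝ} {ρ : ℝ}
    (hu : Tendsto (fun N : ℕ => u N / N) atTop (𝓝 ρ)) {k : ℝ} (hk : k < ρ - 1) (c : ℝ) :
    Tendsto (fun N : ℕ => ∑ n ∈ Finset.Icc 1 N, 1 / ((u N - k * N + c - n) / 2))
      atTop (𝓝 (2 * log ((ρ - k) / (ρ - k - 1)))) := by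
  refine ((tendsto_sum_Icc_one_div_sub (by linarith)
    (tendsto_sub_mul_add_div_natCast hu k c)).const_mul 2).congr fun N => ?_
  simp only [Finset.mul_sum, mul_one_div, one_div_div]

theorem statement16 (γ : ℝ) (hγ : 2 < γ) (M : ℕ → ℕ)
    (hM : ∀ N : ℕ, 2 * N + 2 ≤ M N)
    (hlim : Tendsto (fun N : ℕ => (M N : ℝ) / N) atTop (nhds γ)) :
    Tendsto (fun N : ℕ =>
      ∑ n ∈ Finset.Icc 1 N,
        (trigamma (((M N : ℝ) - N - n + 1) / 2)
          - trigamma (((M N : ℝ) - N - n + 1) / 2 + ((N : ℝ) + 1) / 2)))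
      atTop (nhds (2 * Real.log ((γ - 1) ^ 2 / (γ * (γ - 2))))) := by
  have hval : 2 * log ((γ - 1) / (γ - 1 - 1)) - 2 * log ((γ - 0) / (γ - 0 - 1))
      = 2 * log ((γ - 1) ^ 2 / (γ * (γ - 2))) := by
    have h₀ : γ ≠ 0 := by linarith
    have h₁ : γ - 1 ≠ 0 := by linarith
    have h₂ : γ - 2 ≠ 0 := by linarith
    rw [sub_sub, one_add_one_eq_two, sub_zero, ← mul_sub,
      ← log_div (div_ne_zero h₁ h₂) (div_ne_zero h₀ h₁)]
    congr 2
    field_simp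
  rw [← hval]
  have hsum (k : ℝ) (hk : k < γ - 1) (c : ℝ) := tendsto_sum_Icc_one_div_half_sub hlim hk c
  refine tendsto_of_tendsto_of_tendsto_of_le_of_le
    ((hsum 1 (by linarith) 1).sub (hsum 0 (by linarith) 0))
    ((hsum 1 (by linarith) (-1)).sub (hsum 0 (by linarith) 2)) (fun N => ?_) (fun N => ?_)
  all_goals
    rw [← Finset.sum_sub_distrib]
    refine Finset.sum_le_sum fun n hn => ?_
    have hn₁ : (1 : ℝ) ≤ n := mod_cast (Finset.mem_Icc.mp hn).1
    have hnN : (n : ℝ) ≤ N := mod_cast (Finset.mem_Icc.mp hn).2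
    have hMN : 2 * (N : ℝ) + 2 ≤ M N := mod_cast hM N
  · exact (le_trigamma_sub_trigamma_add (a := ((M N : ℝ) - N - n + 1) / 2)
      (b := ((N : ℝ) + 1) / 2) (by linarith) (by linarith)).trans_eq' (by ring)
  · exact (trigamma_sub_trigamma_add_le (a := ((M N : ℝ) - N - n + 1) / 2)
      (b := ((N : ℝ) + 1) / 2) (by linarith) (by positivity)).trans_eq (by ring)
end
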